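/- For 0 < q < 1 and every complex z, |A'_q(z)| ≤ (q/(1-q)) B_q(|z|), where A_q(z) = ∑_{k=0}^∞ q^{k²}(-z)^k/(q;q)_k and B_q(x) = ∑_{k=0}^∞ q^{k²} x^k/(q;q)_k. -/

import Mathlib

open Finset Filter

/-- Ramanujan function `A_q(z) = ∑ q^{k²}(-z)^k/(q;q)_k`. -/
noncomputable def Aq (q : ℝ) (z : ℂ) : ℂ :=
  ∑' k : ℕ, (q : ℂ) ^ (k ^ 2) * (-z) ^ k / ∏ j ∈ Finset.range k, (1 - (q : ℂ) ^ (j + 1))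

/-- `B_q(x) = ∑ q^{k²} x^k/(q;q)_k`. -/
noncomputable def Bq (q x : ℝ) : ℝ :=
  ∑' k : ℕ, q ^ (k ^ 2) * x ^ k / ∏ j ∈ Finset.range k, (1 - q ^ (j + 1))

lemma summable_master (q c : ℝ) (hq0 : 0 < q) (hq1 : q < 1) (hc : 0 ≤ c) :
    Summable (fun n : ℕ => ((n : ℝ) + 1) * q ^ (n ^ 2) * c ^ n) := by
  apply summable_of_ratio_norm_eventually_le (r := 1/2) (by norm_num)
  have h0 : Tendsto (fun n : ℕ => 4 * c * q ^ n) atTop (nhds 0) := by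
    simpa using (tendsto_pow_atTop_nhds_zero_of_lt_one hq0.le hq1).const_mul (4 * c)
  filter_upwards [h0.eventually_lt_const (by norm_num : (0:ℝ) < 1/2)] with n hn
  have hq2 : q ^ ((n + 1) ^ 2) ≤ q ^ (n ^ 2) * q ^ n := by
    rw [← pow_add]
    exact pow_le_pow_of_le_one hq0.le hq1.le (by nlinarith)
  have hvpos : (0:ℝ) ≤ ((n : ℝ) + 1) * q ^ (n ^ 2) * c ^ n := by positivity
  have h1 : ((n:ℝ) + 1 + 1) * q ^ ((n+1) ^ 2) * c ^ (n+1)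
      ≤ (2 * c * q ^ n) * (((n : ℝ) + 1) * q ^ (n ^ 2) * c ^ n) := by
    calc ((n:ℝ) + 1 + 1) * q ^ ((n+1) ^ 2) * c ^ (n+1)
        ≤ ((n:ℝ) + 1 + 1) * (q ^ (n ^ 2) * q ^ n) * c ^ (n+1) := by
          gcongr

      _ ≤ (2 * c * q ^ n) * (((n : ℝ) + 1) * q ^ (n ^ 2) * c ^ n) := by
          have h2 : ((n:ℝ) + 1 + 1) ≤ 2 * ((n:ℝ) + 1) := by
            nlinarith [Nat.cast_nonneg (α := ℝ) n]
          have h3 : (2 * c * q ^ n) * (((n : ℝ) + 1) * q ^ (n ^ 2) * c ^ n)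
              = (2 * ((n:ℝ) + 1)) * (q ^ (n ^ 2) * q ^ n) * c ^ (n+1) := by ring
          rw [h3]
          gcongr
  have h2 : (2 * c * q ^ n) * (((n : ℝ) + 1) * q ^ (n ^ 2) * c ^ n)
      ≤ (1/2) * (((n : ℝ) + 1) * q ^ (n ^ 2) * c ^ n) := by
    have : 2 * c * q ^ n ≤ 1/2 := by nlinarith [pow_nonneg hq0.le n]
    nlinarith
  rw [Real.norm_eq_abs, Real.norm_eq_abs, abs_of_nonneg (by positivity),
    abs_of_nonneg hvpos]
  push_cast
  linarith

set_option maxHeartbeats 1600000 in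
theorem abs_deriv_Aq_le (q : ℝ) (hq0 : 0 < q) (hq1 : q < 1) (z : ℂ) :
    ‖deriv (Aq q) z‖ ≤ q / (1 - q) * Bq q (‖z‖) := by
  have h1q : 0 < 1 - q := by linarith
  set R : ℝ := ‖z‖ + 1 with hR
  have hR1 : 1 ≤ R := by
    have := norm_nonneg z
    linarith
  have hRz : ‖z‖ < R := by simp [hR]
  set c : ℝ := R / (1 - q) with hc
  have hc0 : 0 ≤ c := by positivity
  -- real partial products
  set P : ℕ → ℝ := fun k => ∏ j ∈ Finset.range k, (1 - q ^ (j + 1)) with hP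
  have hPpos : ∀ k, 0 < P k := by
    intro k
    refine Finset.prod_pos fun j _ => ?_
    have : q ^ (j + 1) < 1 := pow_lt_one₀ hq0.le hq1 (Nat.succ_ne_zero j)
    linarith
  have hPle : ∀ k, (1 - q) ^ k ≤ P k := by
    intro k
    show (1 - q) ^ k ≤ ∏ j ∈ Finset.range k, (1 - q ^ (j + 1))
    have hconst : (1 - q) ^ k = ∏ _j ∈ Finset.range k, (1 - q) := by
      rw [Finset.prod_const, Finset.card_range]
    rw [hconst]
    refine Finset.prod_le_prod (fun j _ => by positivity) fun j _ => ?_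
    have : q ^ (j + 1) ≤ q := by
      calc q ^ (j+1) ≤ q ^ 1 := pow_le_pow_of_le_one hq0.le hq1.le (by omega)
        _ = q := pow_one q
    linarith
  have hD : ∀ k, (∏ j ∈ Finset.range k, (1 - (q : ℂ) ^ (j + 1))) = ((P k : ℝ) : ℂ) := by
    intro k; rw [hP]; push_cast; ring
  -- the functions and their derivatives
  set f : ℕ → ℂ → ℂ := fun k y =>
    (q : ℂ) ^ (k ^ 2) * (-y) ^ k / ∏ j ∈ Finset.range k, (1 - (q : ℂ) ^ (j + 1)) with hf
  set f' : ℕ → ℂ → ℂ := fun k y =>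
    (q : ℂ) ^ (k ^ 2) * (-(k : ℂ) * (-y) ^ (k - 1)) / ∏ j ∈ Finset.range k, (1 - (q : ℂ) ^ (j + 1)) with hf'
  have hder : ∀ (k : ℕ) (y : ℂ), HasDerivAt (f k) (f' k y) y := by
    intro k y
    have h1 : HasDerivAt (fun x : ℂ => (-x) ^ k) ((k : ℂ) * (-y) ^ (k - 1) * (-1)) y :=
      (hasDerivAt_pow k (-y)).comp y (hasDerivAt_neg y)
    have := (h1.const_mul ((q : ℂ) ^ (k ^ 2))).div_const
      (∏ j ∈ Finset.range k, (1 - (q : ℂ) ^ (j + 1)))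
    refine this.congr_deriv ?_
    rw [hf']
    ring
  -- norm of f' k y
  have hnorm : ∀ (k : ℕ) (y : ℂ),
      ‖f' k y‖ = q ^ (k ^ 2) * ((k : ℝ) * (‖y‖) ^ (k - 1)) / P k := by
    intro k y
    rw [hf']
    simp only [hD, norm_div, norm_mul, norm_pow, norm_neg, Complex.norm_real,
      Complex.norm_natCast, Real.norm_eq_abs]
    rw [abs_of_pos (hq0), abs_of_pos (hPpos k)]
  -- uniform bound on ball 0 R
  set u : ℕ → ℝ := fun k => ((k : ℝ) + 1) * q ^ (k ^ 2) * c ^ k with hu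
  have hsum_u : Summable u := summable_master q c hq0 hq1 hc0
  have hbound : ∀ (k : ℕ) (y : ℂ), ‖y‖ ≤ R →
      q ^ (k ^ 2) * ((k : ℝ) * (‖y‖) ^ (k - 1)) / P k ≤ u k := by
    intro k y hy
    have hyR : (‖y‖) ^ (k - 1) ≤ R ^ k := by
      calc (‖y‖) ^ (k - 1) ≤ R ^ (k - 1) :=
            pow_le_pow_left₀ (norm_nonneg y) hy _
        _ ≤ R ^ k := pow_le_pow_right₀ hR1 (Nat.sub_le k 1)
    have hP' := hPle k
    have h1 : q ^ (k ^ 2) * ((k : ℝ) * (‖y‖) ^ (k - 1)) / P k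
        ≤ q ^ (k ^ 2) * ((k : ℝ) * R ^ k) / (1 - q) ^ k := by
      gcongr
    calc q ^ (k ^ 2) * ((k : ℝ) * (‖y‖) ^ (k - 1)) / P k
        ≤ q ^ (k ^ 2) * ((k : ℝ) * R ^ k) / (1 - q) ^ k := h1
      _ ≤ u k := by
          show q ^ (k ^ 2) * ((k : ℝ) * R ^ k) / (1 - q) ^ k ≤ ((k : ℝ) + 1) * q ^ (k ^ 2) * c ^ k
          rw [hc, div_pow, ← mul_div_assoc]
          gcongr ?_ / _
          nlinarith [mul_nonneg (pow_nonneg hq0.le (k ^ 2))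
            (pow_nonneg (by positivity : (0:ℝ) ≤ R) k)]
  -- derivative formula
  have hderiv : HasDerivAt (Aq q) (∑' k, f' k z) z := by
    have : Aq q = fun y => ∑' k, f k y := rfl
    rw [this]
    refine hasDerivAt_tsum_of_isPreconnected (y₀ := (0:ℂ)) hsum_u (Metric.isOpen_ball)
      (convex_ball (0:ℂ) R).isPreconnected (fun n y _ => hder n y) ?_ ?_ ?_ ?_
    · intro n y hy
      rw [hnorm]
      have hy' : ‖y‖ ≤ R := by
        have h := mem_ball_zero_iff.mp hy
        exact h.le
      exact hbound n y hy'
    · exact Metric.mem_ball_self (by positivity)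
    · apply summable_of_ne_finset_zero (s := {0})
      intro n hn
      simp only [Finset.mem_singleton] at hn
      rw [hf]
      simp [zero_pow hn]
    · rw [mem_ball_zero_iff]; exact hRz
  rw [hderiv.deriv]
  -- summability of norms
  have hsum_norm : Summable fun k => ‖f' k z‖ := by
    apply Summable.of_nonneg_of_le (fun k => norm_nonneg _) _ hsum_u
    intro k
    rw [hnorm]
    exact hbound k z hRz.le
  -- Bq terms
  set b : ℕ → ℝ := fun m => q ^ (m ^ 2) * (‖z‖) ^ m / P m with hb
  have hbnonneg : ∀ m, 0 ≤ b m := fun m => by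
    have := hPpos m; positivity
  have hsum_b : Summable b := by
    apply Summable.of_nonneg_of_le hbnonneg _ hsum_u
    intro m
    have hP' := hPle m
    show q ^ (m ^ 2) * (‖z‖) ^ m / P m ≤ ((m : ℝ) + 1) * q ^ (m ^ 2) * c ^ m
    calc q ^ (m ^ 2) * (‖z‖) ^ m / P m
        ≤ q ^ (m ^ 2) * R ^ m / (1 - q) ^ m := by
          gcongr
      _ ≤ ((m : ℝ) + 1) * q ^ (m ^ 2) * c ^ m := by
          rw [hc, div_pow, ← mul_div_assoc]
          gcongr ?_ / _
          nlinarith [mul_nonneg (pow_nonneg hq0.le (m ^ 2))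
            (pow_nonneg (by positivity : (0:ℝ) ≤ R) m)]
  -- key termwise inequality
  have hterm : ∀ m : ℕ, ‖f' (m+1) z‖ ≤ q / (1 - q) * b m := by
    intro m
    rw [hnorm]
    have hPsucc : P (m + 1) = P m * (1 - q ^ (m + 1)) := by
      show (∏ j ∈ Finset.range (m + 1), (1 - q ^ (j + 1)))
          = (∏ j ∈ Finset.range m, (1 - q ^ (j + 1))) * (1 - q ^ (m + 1))
      exact Finset.prod_range_succ _ _
    have hq1m : 0 < 1 - q ^ (m + 1) := by
      have : q ^ (m + 1) < 1 := pow_lt_one₀ hq0.le hq1 (Nat.succ_ne_zero m)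
      linarith
    -- key : (m+1) * q^m * (1-q) ≤ 1 - q^(m+1)
    have key : ((m : ℝ) + 1) * q ^ m * (1 - q) ≤ 1 - q ^ (m + 1) := by
      have hgs : (1 - q ^ (m + 1)) = (1 - q) * ∑ j ∈ Finset.range (m + 1), q ^ j := by
        have := geom_sum_mul q (m + 1)
        nlinarith [this]
      rw [hgs]
      have hsum : ((m : ℝ) + 1) * q ^ m ≤ ∑ j ∈ Finset.range (m + 1), q ^ j := by
        have : ∑ j ∈ Finset.range (m + 1), q ^ m ≤ ∑ j ∈ Finset.range (m + 1), q ^ j :=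
          Finset.sum_le_sum fun j hj => pow_le_pow_of_le_one hq0.le hq1.le
            (by simp at hj; omega)
        simpa using this
      nlinarith
    -- now the main estimate
    have hexp : q ^ ((m + 1) ^ 2) = q ^ (m ^ 2) * q ^ (2 * m) * q := by
      have h2 : (m + 1) ^ 2 = m ^ 2 + 2 * m + 1 := by ring
      rw [h2, pow_add, pow_add, pow_one]
    have hq2m : q ^ (2 * m) ≤ q ^ m := pow_le_pow_of_le_one hq0.le hq1.le (by omega)
    have habs : (0:ℝ) ≤ (‖z‖) ^ m := by positivity
    have hPm := hPpos m
    have h2m : (0:ℝ) ≤ q ^ (2*m) := by positivity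
    have hqm2 : (0:ℝ) ≤ q ^ (m^2) := by positivity
    have hrhs : q / (1 - q) * b m
        = q * (q ^ (m ^ 2) * (‖z‖) ^ m) / ((1 - q) * P m) := by
      rw [hb]
      show q / (1 - q) * (q ^ (m ^ 2) * ‖z‖ ^ m / P m)
          = q * (q ^ (m ^ 2) * ‖z‖ ^ m) / ((1 - q) * P m)
      rw [div_mul_div_comm]
    simp only [Nat.add_sub_cancel]
    rw [hrhs, hPsucc,
      div_le_div_iff₀ (mul_pos hPm hq1m) (mul_pos h1q hPm), hexp]
    push_cast
    have step1 : ((m:ℝ) + 1) * q ^ (2*m) * (1 - q) ≤ 1 - q ^ (m+1) := by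
      calc ((m:ℝ) + 1) * q ^ (2*m) * (1 - q) ≤ ((m:ℝ) + 1) * q ^ m * (1 - q) := by
            gcongr
        _ ≤ 1 - q ^ (m+1) := key
    have hbase : (0:ℝ) ≤ q ^ (m ^ 2) * (‖z‖) ^ m * P m * q :=
      mul_nonneg (mul_nonneg (mul_nonneg hqm2 habs) hPm.le) hq0.le
    nlinarith [mul_le_mul_of_nonneg_left step1 hbase]
  -- assemble
  calc ‖∑' k, f' k z‖
      ≤ ∑' k, ‖f' k z‖ := by
        have hsn : Summable fun k => ‖f' k z‖ := by
          exact hsum_norm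
        exact norm_tsum_le_tsum_norm hsn
    _ = ∑' m, ‖f' (m + 1) z‖ := by
        rw [hsum_norm.tsum_eq_zero_add]
        have : ‖f' 0 z‖ = 0 := by
          rw [hnorm]; simp
        rw [this, zero_add]
    _ ≤ ∑' m, q / (1 - q) * b m := by
        apply Summable.tsum_le_tsum hterm ((summable_nat_add_iff 1).mpr hsum_norm)
        exact hsum_b.mul_left _
    _ = q / (1 - q) * Bq q (‖z‖) := by
        rw [tsum_mul_left]
        rfl
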